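/- Let R, S, T be bounded triangles with α(R) ≤ α(T). Suppose there are morphisms f: 𝕀^R → 𝕀^S(ε) and g: 𝕀^S → 𝕀^T(ε) with g(ε) ∘ f ≠ 0. Then 𝕀^S is ε-interleaved with 𝕀^R or with 𝕀^T. -/

import Mathlib

open CategoryTheory Classical

noncomputable section

/-- Convexity of a subset of a poset. -/
def IsConvex {P : Type} [Preorder P] (I : Set P) : Prop :=
  ∀ ⦃p q r : P⦄, p ∈ I → q ∈ I → p ≤ r → r ≤ q → r ∈ I

/-- Zigzag connectivity within a subset. -/
def ZigzagConnected {P : Type} [Preorder P] (I : Set P) : Prop :=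
  ∀ p ∈ I, ∀ q ∈ I,
    Relation.ReflTransGen (fun a b => a ∈ I ∧ b ∈ I ∧ (a ≤ b ∨ b ≤ a)) p q

/-- An interval in a poset: nonempty, convex, and zigzag connected. -/
def IsIntervalSet {P : Type} [Preorder P] (I : Set P) : Prop :=
  I.Nonempty ∧ IsConvex I ∧ ZigzagConnected I

open scoped Classical in
/-- The pointwise vector space of the interval module: `k` (as `⊤`) on `I`, `0` off `I`. -/
def objSub (k : Type) [Field k] {P : Type} [Preorder P] (I : Set P) (p : P) : Submodule k k :=
  if p ∈ I then ⊤ else ⊥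

open scoped Classical in
/-- The interval persistence module `𝕀^I` as a functor `P ⥤ ModuleCat k`. -/
def intervalModule (k : Type) [Field k] {P : Type} [Preorder P] (I : Set P)
    (hI : IsConvex I) : P ⥤ ModuleCat.{0} k where
  obj p := ModuleCat.of k (objSub k I p)
  map {p q} h :=
    if hpq : p ∈ I ∧ q ∈ I then
      ModuleCat.ofHom
        { toFun := fun x => ⟨(x : k), by simp [objSub, hpq.2]⟩
          map_add' := by intros; rfl
          map_smul' := by intros; rfl }
    else 0
  map_id := by
    intro p
    try dsimp only
    by_cases hp : p ∈ I
    · rw [dif_pos ⟨hp, hp⟩]; rfl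
    · rw [dif_neg (fun h => hp h.1)]
      haveI : Subsingleton ↥(objSub k I p) := by
        rw [objSub, if_neg hp]; infer_instance
      apply ModuleCat.hom_ext; apply LinearMap.ext; intro x
      exact this.allEq _ _
  map_comp := by
    intro p q r hpq hqr
    try dsimp only
    by_cases hpr : p ∈ I ∧ r ∈ I
    · have hq : q ∈ I := hI hpr.1 hpr.2 (leOfHom hpq) (leOfHom hqr)
      rw [dif_pos hpr, dif_pos ⟨hpr.1, hq⟩, dif_pos ⟨hq, hpr.2⟩]
      rfl
    · rw [dif_neg hpr]
      by_cases hp : p ∈ I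
      · have hr : r ∉ I := fun hr => hpr ⟨hp, hr⟩
        haveI : Subsingleton ↥(objSub k I r) := by
          rw [objSub, if_neg hr]; infer_instance
        apply ModuleCat.hom_ext; apply LinearMap.ext; intro x
        exact this.allEq _ _
      · haveI : Subsingleton ↥(objSub k I p) := by
          rw [objSub, if_neg hp]; infer_instance
        apply ModuleCat.hom_ext; apply LinearMap.ext; intro x
        have hx : x = 0 := this.allEq x 0
        rw [hx]
        simp

open DirectSum

open scoped ENNReal

/-- Direct sum of a family of persistence modules. -/
def dsumF (k : Type) [Field k] {P : Type} [Preorder P] {ι : Type}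
    (F : ι → P ⥤ ModuleCat.{0} k) : P ⥤ ModuleCat.{0} k where
  obj p := ModuleCat.of k (⨁ i, ((F i).obj p : Type))
  map {p q} h := ModuleCat.ofHom
    (DFinsupp.mapRange.linearMap (fun i => ((F i).map h).hom))
  map_id := by
    intro p
    try dsimp only
    simp only [CategoryTheory.Functor.map_id]
    apply ModuleCat.hom_ext
    exact DFinsupp.mapRange.linearMap_id
  map_comp := by
    intro p q r hpq hqr
    try dsimp only
    simp only [CategoryTheory.Functor.map_comp]
    apply ModuleCat.hom_ext; apply LinearMap.ext; intro x
    apply DFinsupp.ext; intro i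
    rfl

/-- Use the preorder category structure on `Fin n → ℝ`. -/
instance RnCat (n : ℕ) : Category (Fin n → ℝ) := Preorder.smallCategory _

/-- Diagonal translation by `ε` as an endofunctor of the poset `Fin n → ℝ`. -/
def transl (n : ℕ) (ε : ℝ) : (Fin n → ℝ) ⥤ (Fin n → ℝ) :=
  Monotone.functor (f := fun p i => p i + ε)
    (fun _ _ hab i => by dsimp only; linarith [hab i])

/-- `M` and `N` are `ε`-interleaved `ℝⁿ`-persistence modules. -/
def Interleaved (k : Type) [Field k] {n : ℕ} (ε : ℝ)
    (M N : (Fin n → ℝ) ⥤ ModuleCat.{0} k) : Prop :=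
  ∃ _hε : 0 ≤ ε, ∃ (f : M ⟶ transl n ε ⋙ N) (g : N ⟶ transl n ε ⋙ M),
    (∀ p : Fin n → ℝ, f.app p ≫ g.app (fun i => p i + ε) =
      M.map (homOfLE (show p ≤ fun i => p i + ε + ε from
        fun i => by show p i ≤ p i + ε + ε; linarith))) ∧
    (∀ p : Fin n → ℝ, g.app p ≫ f.app (fun i => p i + ε) =
      N.map (homOfLE (show p ≤ fun i => p i + ε + ε from
        fun i => by show p i ≤ p i + ε + ε; linarith)))

/-- An interval `I ⊆ ℝⁿ` is `δ`-trivial: it contains no pair `p ≤ p + δ`. -/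
def SetTrivial {n : ℕ} (δ : ℝ) (I : Set (Fin n → ℝ)) : Prop :=
  ¬ ∃ p, p ∈ I ∧ (fun i => p i + δ) ∈ I

/-- Barcode data: an indexed family of nonempty convex intervals in `ℝⁿ`. -/
structure Barcode (n : ℕ) where
  ι : Type
  I : ι → Set (Fin n → ℝ)
  nonempty : ∀ i, (I i).Nonempty
  conv : ∀ i, IsConvex (I i)

/-- The interval decomposable module associated to barcode data. -/
def Barcode.module (k : Type) [Field k] {n : ℕ} (B : Barcode n) :
    (Fin n → ℝ) ⥤ ModuleCat.{0} k :=
  dsumF k fun i => intervalModule k (B.I i) (B.conv i)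

/-- `B` is pointwise finite dimensional. -/
def Barcode.pfd (k : Type) [Field k] {n : ℕ} (B : Barcode n) : Prop :=
  ∀ p : Fin n → ℝ, Module.Finite k ((B.module k).obj p)

/-- An `ε`-matching between two barcodes: a partial bijection such that unmatched
intervals are `2ε`-trivial and matched intervals are `ε`-interleaved. -/
def Matched (k : Type) [Field k] {n : ℕ} (ε : ℝ) (B C : Barcode n) : Prop :=
  0 ≤ ε ∧ ∃ (A : Set B.ι) (A' : Set C.ι) (e : A ≃ A'),
    (∀ i ∉ A, SetTrivial (2 * ε) (B.I i)) ∧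
    (∀ j ∉ A', SetTrivial (2 * ε) (C.I j)) ∧
    (∀ i : A, Interleaved k ε
      (intervalModule k (B.I i) (B.conv i))
      (intervalModule k (C.I (e i)) (C.conv (e i))))

/-- The interleaving distance, valued in `ℝ≥0∞`. -/
def dInt (k : Type) [Field k] {n : ℕ} (M N : (Fin n → ℝ) ⥤ ModuleCat.{0} k) : ℝ≥0∞ :=
  ⨅ (ε : ℝ) (_ : Interleaved k ε M N), ENNReal.ofReal ε

/-- The bottleneck distance between barcodes, valued in `ℝ≥0∞`. -/
def dBot (k : Type) [Field k] {n : ℕ} (B C : Barcode n) : ℝ≥0∞ :=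
  ⨅ (ε : ℝ) (_ : Matched k ε B C), ENNReal.ofReal ε

/-- Rectangles: products of real intervals. -/
def rectSet {n : ℕ} (R : Fin n → Set ℝ) : Set (Fin n → ℝ) := {x | ∀ i, x i ∈ R i}

theorem rectSet_convex {n : ℕ} (R : Fin n → Set ℝ) (h : ∀ i, (R i).OrdConnected) :
    IsConvex (rectSet R) := by
  intro p q r hp hq hpr hrq i
  exact (h i).out (hp i) (hq i) ⟨hpr i, hrq i⟩

/-- A barcode consists of rectangles. -/
def IsRectBarcode {n : ℕ} (B : Barcode n) : Prop :=
  ∀ i, ∃ R : Fin n → Set ℝ,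
    (∀ j, (R j).Nonempty ∧ (R j).OrdConnected) ∧ B.I i = rectSet R

/-- A bounded triangle `{(x,y) | x < a, y < b} \ {x + y < 0}` in `ℝ²`. -/
def triangle (a b : ℝ) : Set (Fin 2 → ℝ) :=
  {p | p 0 < a ∧ p 1 < b ∧ 0 ≤ p 0 + p 1}

theorem triangle_convex (a b : ℝ) : IsConvex (triangle a b) :=
  fun _p _q _r hp hq hpr hrq =>
    ⟨lt_of_le_of_lt (hrq 0) hq.1, lt_of_le_of_lt (hrq 1) hq.2.1,
      le_trans hp.2.2 (add_le_add (hpr 0) (hpr 1))⟩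

/-- A general (possibly unbounded) triangle, `a, b ∈ ℝ ∪ {∞}`. -/
def triangleE (a b : EReal) : Set (Fin 2 → ℝ) :=
  {p | (p 0 : EReal) < a ∧ (p 1 : EReal) < b ∧ 0 ≤ p 0 + p 1}

theorem triangleE_convex (a b : EReal) : IsConvex (triangleE a b) :=
  fun _p _q _r hp hq hpr hrq =>
    ⟨lt_of_le_of_lt (EReal.coe_le_coe_iff.mpr (hrq 0)) hq.1,
      lt_of_le_of_lt (EReal.coe_le_coe_iff.mpr (hrq 1)) hq.2.1,
      le_trans hp.2.2 (add_le_add (hpr 0) (hpr 1))⟩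

/-- A barcode consists of triangles. -/
def IsTriangleBarcode (B : Barcode 2) : Prop :=
  ∀ i, ∃ a b : EReal, a ≠ ⊥ ∧ b ≠ ⊥ ∧ 0 < a + b ∧ B.I i = triangleE a b

/-- `I ⊆ ℝⁿ` is `δ`-significant. -/
def SetSignificant {n : ℕ} (δ : ℝ) (I : Set (Fin n → ℝ)) : Prop :=
  ∃ p, p ∈ I ∧ (fun i => p i + δ) ∈ I

/-!
By naturality, a nonzero morphism `𝕀^{T(a,b)} ⟶ 𝕀^{T(a',b')}(ε)` has the property that every
point above a point of its support whose shift lies in `T(a',b')` must lie in `T(a,b)`; moving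
right (or up) out of `T(a,b)` then shows `a' ≤ a + ε` and `b' ≤ b + ε`. Conversely, when the
maxima of two triangles differ by at most `ε` in each coordinate, the fibrewise identity maps
form an `ε`-interleaving. A nonzero `g(ε) ∘ f` makes `f` and `g` nonzero, so
`max_S ≤ max_R + ε` and `max_T ≤ max_S + ε`; if `R` sticks out of `S(ε)` in one coordinate,
then `α(R) ≤ α(T)` forces `S` to lie within `ε` of `T` in both.
-/

section IntervalModule

variable {k : Type} [Field k] {P Q : Type} [Preorder P] [Preorder Q]

lemma coe_objSub_eq_zero {I : Set P} {p : P} (hp : p ∉ I) (x : objSub k I p) : (x : k) = 0 := by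
  have hx := x.2
  simp only [objSub, if_neg hp] at hx
  exact (Submodule.mem_bot k).mp hx

variable (k) in
def intervalFiberMap (I : Set P) (J : Set Q) (p : P) (q : Q) :
    objSub k I p →ₗ[k] objSub k J q :=
  if h : p ∈ I ∧ q ∈ J then
    { toFun := fun x => ⟨(x : k), by simp [objSub, h.2]⟩
      map_add' := by intros; rfl
      map_smul' := by intros; rfl }
  else 0

lemma coe_intervalFiberMap_apply (I : Set P) (J : Set Q) (p : P) (q : Q) (x : objSub k I p) :
    (intervalFiberMap k I J p q x : k) = if p ∈ I ∧ q ∈ J then (x : k) else 0 := by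
  unfold intervalFiberMap
  split_ifs <;> rfl

lemma intervalFiberMap_comp {R : Type} [Preorder R] {I : Set P} {J : Set Q} {K : Set R}
    {p : P} {q : Q} {r : R} (h : p ∈ I → r ∈ K → q ∈ J) :
    intervalFiberMap k J K q r ∘ₗ intervalFiberMap k I J p q = intervalFiberMap k I K p r := by
  ext x
  simp only [LinearMap.comp_apply, coe_intervalFiberMap_apply]
  by_cases hp : p ∈ I
  · by_cases hr : r ∈ K <;> simp [hp, hr, h]
  · simp [hp]

lemma intervalModule_map (I : Set P) (hI : IsConvex I) {p q : P} (h : p ⟶ q) :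
    (intervalModule k I hI).map h = ModuleCat.ofHom (intervalFiberMap k I I p q) := by
  show (if hpq : p ∈ I ∧ q ∈ I then _ else 0) = _
  unfold intervalFiberMap
  split_ifs with hpq
  exacts [(dif_pos hpq).trans rfl, (dif_neg hpq).trans rfl]

lemma intervalModule_map_apply (I : Set P) (hI : IsConvex I) {p q : P} (h : p ⟶ q)
    (x : objSub k I p) : (intervalModule k I hI).map h x = intervalFiberMap k I I p q x := by
  rw [intervalModule_map]
  rfl

/-- The condition under which the fibrewise identity maps form a morphism
`𝕀^I ⟶ F ⋙ 𝕀^J`. -/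
def IntervalHomCompatible (F : P ⥤ Q) (I : Set P) (J : Set Q) : Prop :=
  ∀ ⦃p q : P⦄, p ≤ q → p ∈ I → F.obj q ∈ J → q ∈ I ∧ F.obj p ∈ J

variable (k) in
def intervalModuleHom (F : P ⥤ Q) {I : Set P} {J : Set Q} (hI : IsConvex I) (hJ : IsConvex J)
    (hIJ : IntervalHomCompatible F I J) :
    intervalModule k I hI ⟶ F ⋙ intervalModule k J hJ where
  app p := ModuleCat.ofHom (intervalFiberMap k I J p (F.obj p))
  naturality p q h := by
    rw [Functor.comp_map, intervalModule_map, intervalModule_map]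
    exact ModuleCat.hom_ext <|
      (intervalFiberMap_comp fun hp hq => (hIJ (leOfHom h) hp hq).1).trans
        (intervalFiberMap_comp fun hp hq => (hIJ (leOfHom h) hp hq).2).symm

end IntervalModule

lemma exists_app_apply_ne_zero {R : Type*} [Ring R] {C : Type*} [Category C]
    {M N : C ⥤ ModuleCat R} {η : M ⟶ N} (hη : η ≠ 0) : ∃ c x, η.app c x ≠ 0 := by
  by_contra! h
  exact hη (by ext c x; exact h c x)

section Support

variable {k : Type} [Field k] {P Q : Type} [Preorder P] [Preorder Q] {F : P ⥤ Q}
  {I : Set P} {J : Set Q} {hI : IsConvex I} {hJ : IsConvex J}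
  {f : intervalModule k I hI ⟶ F ⋙ intervalModule k J hJ} {p : P} {x : objSub k I p}

lemma mem_of_app_apply_ne_zero (hx : f.app p x ≠ 0) : p ∈ I ∧ F.obj p ∈ J := by
  refine ⟨by_contra fun hp => hx ?_, by_contra fun hp => hx ?_⟩
  · rw [show x = 0 from Subtype.ext (coe_objSub_eq_zero hp x)]
    exact map_zero _
  · exact Subtype.ext (coe_objSub_eq_zero hp _)

lemma mem_of_le_of_app_apply_ne_zero (hx : f.app p x ≠ 0) {q : P} (hpq : p ≤ q)
    (hq : F.obj q ∈ J) : q ∈ I := by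
  by_contra hqI
  obtain ⟨-, hFp⟩ := mem_of_app_apply_ne_zero hx
  have hvanish : intervalFiberMap k I I p q x = 0 :=
    Subtype.ext (by simp [coe_intervalFiberMap_apply, hqI])
  have hnat := ConcreteCategory.congr_hom (f.naturality (homOfLE hpq)) x
  erw [ConcreteCategory.comp_apply, ConcreteCategory.comp_apply, Functor.comp_map,
    intervalModule_map_apply I hI, intervalModule_map_apply J hJ, hvanish, map_zero] at hnat
  have hval := congrArg Subtype.val hnat
  erw [coe_intervalFiberMap_apply, if_pos ⟨hFp, hq⟩] at hval
  exact hx (Subtype.ext hval.symm)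

end Support

lemma interleaved_intervalModule {k : Type} [Field k] {n : ℕ} {ε : ℝ} (hε : 0 ≤ ε)
    {I J : Set (Fin n → ℝ)} (hI : IsConvex I) (hJ : IsConvex J)
    (hIJ : IntervalHomCompatible (transl n ε) I J) (hJI : IntervalHomCompatible (transl n ε) J I)
    (hI₂ : ∀ p ∈ I, (fun i => p i + ε + ε) ∈ I → (fun i => p i + ε) ∈ J)
    (hJ₂ : ∀ p ∈ J, (fun i => p i + ε + ε) ∈ J → (fun i => p i + ε) ∈ I) :
    Interleaved k ε (intervalModule k I hI) (intervalModule k J hJ) :=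
  ⟨hε, intervalModuleHom k _ hI hJ hIJ, intervalModuleHom k _ hJ hI hJI,
    fun p => by rw [intervalModule_map]; exact ModuleCat.hom_ext (intervalFiberMap_comp (hI₂ p)),
    fun p => by rw [intervalModule_map]; exact ModuleCat.hom_ext (intervalFiberMap_comp (hJ₂ p))⟩

@[simp]
lemma transl_obj_apply {n : ℕ} (ε : ℝ) (p : Fin n → ℝ) (i : Fin n) :
    (transl n ε).obj p i = p i + ε :=
  rfl

section Triangle

variable {a b a' b' ε : ℝ}

lemma triangle_intervalHomCompatible (hε : 0 ≤ ε) (ha : a' ≤ a + ε) (hb : b' ≤ b + ε) :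
    IntervalHomCompatible (transl 2 ε) (triangle a b) (triangle a' b') := by
  intro p q hpq hp hq
  simp only [triangle, Set.mem_ofPred_eq, transl_obj_apply] at hp hq ⊢
  have := hpq 0
  have := hpq 1
  refine ⟨⟨?_, ?_, ?_⟩, ?_, ?_, ?_⟩ <;> linarith

lemma mem_triangle_of_add_add_mem (ha : a ≤ a' + ε) (hb : b ≤ b' + ε) {p : Fin 2 → ℝ}
    (hp : p ∈ triangle a b) (hp₂ : (fun i => p i + ε + ε) ∈ triangle a b) :
    (fun i => p i + ε) ∈ triangle a' b' := by
  obtain ⟨-, -, hps⟩ := hp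
  obtain ⟨h0, h1, h2⟩ := hp₂
  dsimp only at h0 h1 h2
  refine ⟨?_, ?_, ?_⟩ <;> dsimp only <;> linarith

lemma interleaved_triangle (k : Type) [Field k] (ha : |a - a'| ≤ ε) (hb : |b - b'| ≤ ε) :
    Interleaved k ε (intervalModule k (triangle a b) (triangle_convex a b))
      (intervalModule k (triangle a' b') (triangle_convex a' b')) := by
  obtain ⟨ha₁, ha₂⟩ := abs_sub_le_iff.1 ha
  obtain ⟨hb₁, hb₂⟩ := abs_sub_le_iff.1 hb
  have hε : 0 ≤ ε := (abs_nonneg _).trans ha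
  exact interleaved_intervalModule hε _ _
    (triangle_intervalHomCompatible hε (by linarith) (by linarith))
    (triangle_intervalHomCompatible hε (by linarith) (by linarith))
    (fun p => mem_triangle_of_add_add_mem (by linarith) (by linarith))
    (fun p => mem_triangle_of_add_add_mem (by linarith) (by linarith))

lemma triangle_max_le_of_forall_le {p : Fin 2 → ℝ} (hp : (fun i => p i + ε) ∈ triangle a' b')
    (hup : ∀ q, p ≤ q → (fun i => q i + ε) ∈ triangle a' b' → q ∈ triangle a b) :
    a' ≤ a + ε ∧ b' ≤ b + ε := by
  obtain ⟨hp0, hp1, hps⟩ := hp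
  dsimp only at hp0 hp1 hps
  constructor
  · by_contra! h
    have hq := hup ![max (p 0) a, p 1] (fun i => by fin_cases i <;> simp)
      ⟨show max (p 0) a + ε < a' from add_lt_of_lt_sub_right (max_lt (by linarith) (by linarith)),
        show p 1 + ε < b' from hp1,
        show 0 ≤ max (p 0) a + ε + (p 1 + ε) by linarith [le_max_left (p 0) a]⟩
    exact (le_max_right (p 0) a).not_gt hq.1
  · by_contra! h
    have hq := hup ![p 0, max (p 1) b] (fun i => by fin_cases i <;> simp)
      ⟨show p 0 + ε < a' from hp0,
        show max (p 1) b + ε < b' from add_lt_of_lt_sub_right (max_lt (by linarith) (by linarith)),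
        show 0 ≤ p 0 + ε + (max (p 1) b + ε) by linarith [le_max_left (p 1) b]⟩
    exact (le_max_right (p 1) b).not_gt hq.2.1

lemma triangle_max_le_of_ne_zero {k : Type} [Field k]
    {f : intervalModule k (triangle a b) (triangle_convex a b) ⟶
      transl 2 ε ⋙ intervalModule k (triangle a' b') (triangle_convex a' b')} (hf : f ≠ 0) :
    a' ≤ a + ε ∧ b' ≤ b + ε := by
  obtain ⟨p, x, hx⟩ := exists_app_apply_ne_zero hf
  exact triangle_max_le_of_forall_le (mem_of_app_apply_ne_zero hx).2
    fun q hpq hq => mem_of_le_of_app_apply_ne_zero hx hpq hq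

end Triangle

theorem triangle_close_lemma_general
    (k : Type) [Field k] (ε : ℝ)
    (aR bR aS bS aT bT : ℝ)
    (hα : aR + bR ≤ aT + bT)
    (f : intervalModule k (triangle aR bR) (triangle_convex aR bR) ⟶
      transl 2 ε ⋙ intervalModule k (triangle aS bS) (triangle_convex aS bS))
    (g : intervalModule k (triangle aS bS) (triangle_convex aS bS) ⟶
      transl 2 ε ⋙ intervalModule k (triangle aT bT) (triangle_convex aT bT))
    (hfg : f ≫ CategoryTheory.Functor.whiskerLeft (transl 2 ε) g ≠ 0) :
    Interleaved k ε
      (intervalModule k (triangle aS bS) (triangle_convex aS bS))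
      (intervalModule k (triangle aR bR) (triangle_convex aR bR)) ∨
    Interleaved k ε
      (intervalModule k (triangle aS bS) (triangle_convex aS bS))
      (intervalModule k (triangle aT bT) (triangle_convex aT bT)) := by
  obtain ⟨haRS, hbRS⟩ := triangle_max_le_of_ne_zero (f := f) fun hf => hfg (by simp [hf])
  obtain ⟨haST, hbST⟩ := triangle_max_le_of_ne_zero (f := g) fun hg => hfg (by ext; simp [hg])
  have hclose : (aR ≤ aS + ε ∧ bR ≤ bS + ε) ∨ (aS ≤ aT + ε ∧ bS ≤ bT + ε) := by
    rw [or_iff_not_imp_left, not_and_or, not_le, not_le]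
    rintro (h | h) <;> constructor <;> linarith
  rcases hclose with ⟨ha, hb⟩ | ⟨ha, hb⟩
  · exact Or.inl (interleaved_triangle k (abs_sub_le_iff.2 ⟨by linarith, by linarith⟩)
      (abs_sub_le_iff.2 ⟨by linarith, by linarith⟩))
  · exact Or.inr (interleaved_triangle k (abs_sub_le_iff.2 ⟨by linarith, by linarith⟩)
      (abs_sub_le_iff.2 ⟨by linarith, by linarith⟩))

/-- **Lemma 3.15.** Let `R`, `S`, `T` be bounded triangles with
`α(R) ≤ α(T)`, and suppose `f : 𝕀^R ⟶ 𝕀^S(ε)` and `g : 𝕀^S ⟶ 𝕀^T(ε)` satisfy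
`g(ε) ∘ f ≠ 0`.  Then `𝕀^S` is `ε`-interleaved with `𝕀^R` or with `𝕀^T`. -/
theorem triangle_close_lemma
    (k : Type) [Field k] (ε : ℝ) (hε : 0 ≤ ε)
    (aR bR aS bS aT bT : ℝ)
    (hR : 0 < aR + bR) (hS : 0 < aS + bS) (hT : 0 < aT + bT)
    (hα : aR + bR ≤ aT + bT)
    (f : intervalModule k (triangle aR bR) (triangle_convex aR bR) ⟶
      transl 2 ε ⋙ intervalModule k (triangle aS bS) (triangle_convex aS bS))
    (g : intervalModule k (triangle aS bS) (triangle_convex aS bS) ⟶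
      transl 2 ε ⋙ intervalModule k (triangle aT bT) (triangle_convex aT bT))
    (hfg : f ≫ CategoryTheory.Functor.whiskerLeft (transl 2 ε) g ≠ 0) :
    Interleaved k ε
      (intervalModule k (triangle aS bS) (triangle_convex aS bS))
      (intervalModule k (triangle aR bR) (triangle_convex aR bR)) ∨
    Interleaved k ε
      (intervalModule k (triangle aS bS) (triangle_convex aS bS))
      (intervalModule k (triangle aT bT) (triangle_convex aT bT)) :=
  triangle_close_lemma_general k ε aR bR aS bS aT bT hα f g hfg
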